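/- In the pair model of C^∞(S^{1|1}), the graded Leibniz formula holds: for every integer m ≥ 0 and all superfunctions F and G, η^m(F ⋆ G) = Σ_{k=0}^{m} (m choose k)_s · η^k(σ^{m−k}(F)) ⋆ η^{m−k}(G), where (m choose k)_s is the super binomial coefficient. -/

import Mathlib

/-- Pair model of `C^∞(S^{1|1})`: the pair `(f, g)` represents the superfunction
`F = f(x) + g(x)θ`. -/
abbrev SuperFun : Type := (ℝ → ℝ) × (ℝ → ℝ)

/-- A pair `(f, g)` models a superfunction when both components are smooth and
`2π`-periodic. -/
def IsSuperFun (F : SuperFun) : Prop :=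
  ContDiff ℝ (⊤ : ℕ∞) F.1 ∧ ContDiff ℝ (⊤ : ℕ∞) F.2 ∧
    Function.Periodic F.1 (2 * Real.pi) ∧ Function.Periodic F.2 (2 * Real.pi)

/-- The product `(f, g) ⋆ (p, q) = (f·p, f·q + g·p)`. -/
def sstar (F G : SuperFun) : SuperFun :=
  (F.1 * G.1, F.1 * G.2 + F.2 * G.1)

/-- The parity involution `σ(f, g) = (f, −g)`. -/
def ssigma (F : SuperFun) : SuperFun := (F.1, -F.2)

/-- The odd vector field `η = ∂/∂θ + θ·∂/∂x`, acting by `η(f, g) = (g, f′)`. -/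
noncomputable def seta (F : SuperFun) : SuperFun := (F.2, deriv F.1)

/-- The super binomial coefficient `(m choose k)_s`. -/
def sbinom (m k : ℕ) : ℕ :=
  if k % 2 = 0 ∨ m % 2 = 1 then (m / 2).choose (k / 2) else 0

/-! ### Auxiliary material -/

/-- Both components smooth. -/
def Sm (F : SuperFun) : Prop := ContDiff ℝ (⊤ : ℕ∞) F.1 ∧ ContDiff ℝ (⊤ : ℕ∞) F.2

lemma ContDiff.my_deriv {f : ℝ → ℝ} (h : ContDiff ℝ (⊤ : ℕ∞) f) : ContDiff ℝ (⊤ : ℕ∞) (deriv f) := by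
  exact ContDiff.iterate_deriv 1 h

lemma Sm.seta {F : SuperFun} (h : Sm F) : Sm (seta F) := ⟨h.2, h.1.my_deriv⟩

lemma Sm.ssigma {F : SuperFun} (h : Sm F) : Sm (ssigma F) := ⟨h.1, h.2.neg⟩

lemma Sm.sstar {F G : SuperFun} (hF : Sm F) (hG : Sm G) : Sm (sstar F G) :=
  ⟨hF.1.mul hG.1, (hF.1.mul hG.2).add (hF.2.mul hG.1)⟩

lemma Sm.iter_seta {F : SuperFun} (k : ℕ) (h : Sm F) : Sm (_root_.seta^[k] F) := by
  induction k with
  | zero => exact h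
  | succ k ih => rw [Function.iterate_succ_apply']; exact ih.seta

lemma Sm.iter_ssigma {F : SuperFun} (k : ℕ) (h : Sm F) : Sm (_root_.ssigma^[k] F) := by
  induction k with
  | zero => exact h
  | succ k ih => rw [Function.iterate_succ_apply']; exact ih.ssigma

lemma Sm.diff1 {F : SuperFun} (h : Sm F) : Differentiable ℝ F.1 :=
  h.1.differentiable (by simp)

lemma Sm.zsmul {F : SuperFun} (z : ℤ) (h : Sm F) : Sm (z • F) := by
  constructor
  · have e : (z • F).1 = fun x => (z : ℝ) * F.1 x := by funext x; simp [zsmul_eq_mul]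
    rw [e]; exact contDiff_const.mul h.1
  · have e : (z • F).2 = fun x => (z : ℝ) * F.2 x := by funext x; simp [zsmul_eq_mul]
    rw [e]; exact contDiff_const.mul h.2

lemma seta_zsmul (z : ℤ) (F : SuperFun) : seta (z • F) = z • seta F := by
  refine Prod.ext rfl ?_
  show deriv (z • F.1) = z • deriv F.1
  funext x
  have h : (z • F.1) = fun y => (z : ℝ) * F.1 y := by
    funext y; simp [zsmul_eq_mul]
  rw [h, deriv_const_mul_field]
  simp [zsmul_eq_mul]

lemma seta_add (A B : SuperFun) (hA : Differentiable ℝ A.1) (hB : Differentiable ℝ B.1) :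
    seta (A + B) = seta A + seta B := by
  refine Prod.ext rfl ?_
  show deriv (A.1 + B.1) = deriv A.1 + deriv B.1
  funext x
  have h : (A.1 + B.1) = fun y => A.1 y + B.1 y := rfl
  rw [h]
  simp [deriv_fun_add (hA x) (hB x)]

lemma seta_sum (n : ℕ) (f : ℕ → SuperFun) (h : ∀ i, Differentiable ℝ (f i).1) :
    seta (∑ i ∈ Finset.range n, f i) = ∑ i ∈ Finset.range n, seta (f i) := by
  induction n with
  | zero =>
      simp only [Finset.range_zero, Finset.sum_empty]
      refine Prod.ext rfl ?_
      show deriv (fun _ : ℝ => (0:ℝ)) = 0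
      funext x; simp
  | succ n ih =>
      have hdiff : Differentiable ℝ (∑ i ∈ Finset.range n, f i).1 := by
        rw [Prod.fst_sum]
        have h2 : (∑ i ∈ Finset.range n, (f i).1) = fun x => ∑ i ∈ Finset.range n, (f i).1 x := by
          funext x; simp
        rw [h2]
        exact Differentiable.fun_sum fun i _ => h i
      rw [Finset.sum_range_succ, Finset.sum_range_succ, seta_add _ _ hdiff (h n), ih]

lemma seta_sstar (A B : SuperFun) (hA : Differentiable ℝ A.1) (hB : Differentiable ℝ B.1) :
    seta (sstar A B) = sstar (seta A) B + sstar (ssigma A) (seta B) := by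
  unfold seta sstar ssigma
  refine Prod.ext ?_ ?_
  · show A.1 * B.2 + A.2 * B.1 = A.2 * B.1 + A.1 * B.2
    ring
  · show deriv (A.1 * B.1) = (A.2 * B.2 + deriv A.1 * B.1) + (A.1 * deriv B.1 + (-A.2) * B.2)
    funext x
    have h : (A.1 * B.1) = fun y => A.1 y * B.1 y := rfl
    rw [h]
    simp only [Pi.add_apply, Pi.mul_apply, Pi.neg_apply]
    rw [deriv_fun_mul (hA x) (hB x)]
    ring

lemma sstar_zsmul_left (z : ℤ) (A B : SuperFun) : sstar (z • A) B = z • sstar A B := by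
  unfold sstar
  refine Prod.ext ?_ ?_ <;>
  · show _ = _
    funext x
    simp [zsmul_eq_mul]
    ring

lemma ssigma_seta (X : SuperFun) : ssigma (seta X) = -seta (ssigma X) := by
  unfold ssigma seta
  refine Prod.ext ?_ ?_ <;> · show _ = _ ; funext x ; simp

lemma ssigma_seta_iter (k : ℕ) (X : SuperFun) :
    ssigma (seta^[k] X) = ((-1 : ℤ))^k • seta^[k] (ssigma X) := by
  induction k with
  | zero => simp
  | succ k ih =>
      rw [Function.iterate_succ_apply', ssigma_seta, ih, seta_zsmul,
        show seta^[k+1] (ssigma X) = seta (seta^[k] (ssigma X)) from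
          Function.iterate_succ_apply' _ _ _, pow_succ]
      module

/-! ### sbinom facts -/

lemma sbinom_zero (m : ℕ) : sbinom m 0 = 1 := by simp [sbinom]

lemma sbinom_gt (m k : ℕ) (h : m < k) : sbinom m k = 0 := by
  unfold sbinom
  split
  · exact Nat.choose_eq_zero_of_lt (by omega)
  · rfl

lemma sbinom_succ_succ (m k : ℕ) :
    (sbinom (m+1) (k+1) : ℤ) = (sbinom m k : ℤ) + (-1)^(k+1) * (sbinom m (k+1) : ℤ) := by
  rcases Nat.even_or_odd m with ⟨a, ha⟩ | ⟨a, ha⟩ <;>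
    rcases Nat.even_or_odd k with ⟨b, hb⟩ | ⟨b, hb⟩ <;> subst ha hb
  · -- m = 2a (a+a), k = 2b
    have h1 : sbinom (a+a+1) (b+b+1) = a.choose b := by
      unfold sbinom
      rw [if_pos (Or.inr (by omega))]
      congr 1 <;> omega
    have h2 : sbinom (a+a) (b+b) = a.choose b := by
      unfold sbinom
      rw [if_pos (Or.inl (by omega))]
      congr 1 <;> omega
    have h3 : sbinom (a+a) (b+b+1) = 0 := by
      unfold sbinom
      rw [if_neg (by omega)]
    rw [h1, h2, h3]
    rw [Odd.neg_one_pow ⟨b, by omega⟩]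
    push_cast; ring
  · -- m = 2a, k = 2b+1
    have h1 : sbinom (a+a+1) (2*b+1+1) = a.choose (b+1) := by
      unfold sbinom
      rw [if_pos (Or.inl (by omega))]
      congr 1 <;> omega
    have h2 : sbinom (a+a) (2*b+1) = 0 := by
      unfold sbinom
      rw [if_neg (by omega)]
    have h3 : sbinom (a+a) (2*b+1+1) = a.choose (b+1) := by
      unfold sbinom
      rw [if_pos (Or.inl (by omega))]
      congr 1 <;> omega
    rw [h1, h2, h3]
    rw [Even.neg_one_pow ⟨b+1, by omega⟩]
    push_cast; ring
  · -- m = 2a+1, k = 2b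
    have h1 : sbinom (2*a+1+1) (b+b+1) = 0 := by
      unfold sbinom
      rw [if_neg (by omega)]
    have h2 : sbinom (2*a+1) (b+b) = a.choose b := by
      unfold sbinom
      rw [if_pos (Or.inr (by omega))]
      congr 1 <;> omega
    have h3 : sbinom (2*a+1) (b+b+1) = a.choose b := by
      unfold sbinom
      rw [if_pos (Or.inr (by omega))]
      congr 1 <;> omega
    rw [h1, h2, h3]
    rw [Odd.neg_one_pow ⟨b, by omega⟩]
    push_cast; ring
  · -- m = 2a+1, k = 2b+1
    have h1 : sbinom (2*a+1+1) (2*b+1+1) = (a+1).choose (b+1) := by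
      unfold sbinom
      rw [if_pos (Or.inl (by omega))]
      congr 1 <;> omega
    have h2 : sbinom (2*a+1) (2*b+1) = a.choose b := by
      unfold sbinom
      rw [if_pos (Or.inr (by omega))]
      congr 1 <;> omega
    have h3 : sbinom (2*a+1) (2*b+1+1) = a.choose (b+1) := by
      unfold sbinom
      rw [if_pos (Or.inl (by omega))]
      congr 1 <;> omega
    rw [h1, h2, h3]
    rw [Even.neg_one_pow ⟨b+1, by omega⟩]
    rw [Nat.choose_succ_succ]
    push_cast; ring

/-! ### Main induction -/

theorem key (m : ℕ) (F G : SuperFun) (hF : Sm F) (hG : Sm G) :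
    seta^[m] (sstar F G) =
      ∑ k ∈ Finset.range (m + 1),
        (sbinom m k : ℤ) • sstar (seta^[k] (ssigma^[m - k] F)) (seta^[m - k] G) := by
  induction m with
  | zero => simp [sbinom_zero]
  | succ m ih =>
      rw [Function.iterate_succ_apply', ih]
      -- differentiate the sum term by term
      have hterm : ∀ k : ℕ, Sm (seta^[k] (ssigma^[m - k] F)) :=
        fun k => (hF.iter_ssigma (m-k)).iter_seta k
      have htermG : ∀ k : ℕ, Sm (seta^[m-k] G) := fun k => hG.iter_seta (m-k)
      have hd : ∀ i : ℕ, Differentiable ℝ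
          (((sbinom m i : ℤ) • sstar (seta^[i] (ssigma^[m - i] F)) (seta^[m - i] G)).1) := by
        intro i
        exact (Sm.zsmul _ ((hterm i).sstar (htermG i))).diff1
      rw [seta_sum _ _ hd]
      -- compute seta of each term
      have hstep : ∀ k ∈ Finset.range (m+1),
          seta ((sbinom m k : ℤ) • sstar (seta^[k] (ssigma^[m - k] F)) (seta^[m - k] G)) =
          (sbinom m k : ℤ) • sstar (seta^[k+1] (ssigma^[(m+1) - (k+1)] F)) (seta^[(m+1)-(k+1)] G)
          + ((sbinom m k : ℤ) * (-1)^k) • sstar (seta^[k] (ssigma^[(m+1) - k] F)) (seta^[(m+1)-k] G) := by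
        intro k hk
        rw [Finset.mem_range] at hk
        have hk' : k ≤ m := by omega
        have e1 : (m+1) - (k+1) = m - k := by omega
        have e2 : (m+1) - k = (m - k) + 1 := by omega
        rw [seta_zsmul, seta_sstar _ _ (hterm k).diff1 (htermG k).diff1]
        rw [ssigma_seta_iter, sstar_zsmul_left]
        rw [e1, e2]
        rw [show ssigma^[m-k+1] F = ssigma (ssigma^[m-k] F) from Function.iterate_succ_apply' _ _ _]
        rw [show seta^[k+1] (ssigma^[m-k] F) = seta (seta^[k] (ssigma^[m-k] F)) from
          Function.iterate_succ_apply' _ _ _]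
        rw [show seta^[m-k+1] G = seta (seta^[m-k] G) from Function.iterate_succ_apply' _ _ _]
        rw [smul_add, smul_smul]
      rw [Finset.sum_congr rfl hstep, Finset.sum_add_distrib]
      -- now rearrange
      set T : ℕ → SuperFun := fun k => sstar (seta^[k] (ssigma^[(m+1) - k] F)) (seta^[(m+1)-k] G)
        with hT
      show (∑ k ∈ Finset.range (m+1), (sbinom m k : ℤ) • T (k+1))
          + (∑ k ∈ Finset.range (m+1), ((sbinom m k : ℤ) * (-1)^k) • T k)
          = ∑ k ∈ Finset.range (m+2), (sbinom (m+1) k : ℤ) • T k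
      rw [Finset.sum_range_succ' (fun k => (sbinom (m+1) k : ℤ) • T k) (m+1)]
      rw [Finset.sum_range_succ' (fun k => ((sbinom m k : ℤ) * (-1)^k) • T k) m]
      have hlast : ∑ k ∈ Finset.range m, ((sbinom m (k+1) : ℤ) * (-1)^(k+1)) • T (k+1)
          = ∑ k ∈ Finset.range (m+1), ((sbinom m (k+1) : ℤ) * (-1)^(k+1)) • T (k+1) := by
        rw [Finset.sum_range_succ]
        rw [sbinom_gt m (m+1) (by omega)]
        simp
      rw [hlast]
      have hcongr : ∀ k ∈ Finset.range (m+1),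
          (sbinom m k : ℤ) • T (k+1) + ((sbinom m (k+1) : ℤ) * (-1)^(k+1)) • T (k+1)
          = (sbinom (m+1) (k+1) : ℤ) • T (k+1) := by
        intro k _
        have hc : (sbinom m k : ℤ) + (sbinom m (k+1) : ℤ) * (-1)^(k+1)
            = (sbinom (m+1) (k+1) : ℤ) := by
          rw [sbinom_succ_succ]; ring
        rw [← add_smul, hc]
      have hsum : (∑ k ∈ Finset.range (m+1), (sbinom m k : ℤ) • T (k+1))
          + ∑ k ∈ Finset.range (m+1), ((sbinom m (k+1) : ℤ) * (-1)^(k+1)) • T (k+1)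
          = ∑ k ∈ Finset.range (m+1), (sbinom (m+1) (k+1) : ℤ) • T (k+1) := by
        rw [← Finset.sum_add_distrib]
        exact Finset.sum_congr rfl hcongr
      rw [← hsum, sbinom_zero, sbinom_zero]
      push_cast
      module

/-- Graded Leibniz formula: for every `m ≥ 0` and all superfunctions `F`, `G`,
`η^m(F ⋆ G) = Σ_{k=0}^{m} (m choose k)_s · η^k(σ^{m−k}(F)) ⋆ η^{m−k}(G)`. -/
theorem stmt_11 (m : ℕ) (F G : SuperFun) (hF : IsSuperFun F) (hG : IsSuperFun G) :
    seta^[m] (sstar F G) =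
      ∑ k ∈ Finset.range (m + 1),
        sbinom m k • sstar (seta^[k] (ssigma^[m - k] F)) (seta^[m - k] G) := by
  rw [key m F G ⟨hF.1, hF.2.1⟩ ⟨hG.1, hG.2.1⟩]
  exact Finset.sum_congr rfl fun k _ => natCast_zsmul _ _
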